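/- For all natural numbers k ≥ 4 and n, t with 0 < t, if n* = 2^k and (n+t)* is a power of 2, then 2^k divides t. -/

import Mathlib

def nstar (n : ℕ) : ℕ := ∑ i ∈ Finset.range (n + 1), n.factorial / i.factorial

open Finset in
lemma nstar_eq_desc (n : ℕ) : nstar n = ∑ j ∈ range (n+1), n.descFactorial j := by
  unfold nstar
  rw [← Finset.sum_range_reflect]
  apply Finset.sum_congr rfl
  intro i hi
  rw [Finset.mem_range] at hi
  rw [Nat.descFactorial_eq_div (show i ≤ n by omega)]
  simp only [show n+1-1-i = n-i from by omega]

lemma nstar_succ (n : ℕ) : nstar (n+1) = (n+1) * nstar n + 1 := by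
  rw [nstar_eq_desc, nstar_eq_desc, Finset.sum_range_succ' _ (n+1)]
  have : ∀ j ∈ Finset.range (n+1), (n+1).descFactorial (j+1) = (n+1) * n.descFactorial j := by
    intro j _; exact Nat.succ_descFactorial_succ n j
  rw [Finset.sum_congr rfl this, ← Finset.mul_sum, Nat.descFactorial_zero]

def PZ (j : ℕ) (x : ℤ) : ℤ := ∏ i ∈ Finset.range j, (x - i)

def DD : ℕ → ℤ → ℤ → ℤ
  | 0, _, _ => 0
  | (j+1), x, y => (x - j) * DD j x y + PZ j y

lemma PZ_succ (j : ℕ) (x : ℤ) : PZ (j+1) x = PZ j x * (x - j) := Finset.prod_range_succ _ _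

lemma PZ_sub (j : ℕ) (x y : ℤ) : PZ j x - PZ j y = (x - y) * DD j x y := by
  induction j with
  | zero => simp [PZ, DD]
  | succ j ih =>
    rw [PZ_succ, PZ_succ, DD]
    have : PZ j x = PZ j y + (x - y) * DD j x y := by linarith [ih]
    rw [this]; ring

lemma cast_descFactorial (n j : ℕ) : (n.descFactorial j : ℤ) = PZ j n := by
  induction j with
  | zero => simp [PZ]
  | succ j ih =>
    rw [PZ_succ, ← ih, Nat.descFactorial_succ]
    by_cases h : j < n
    · have : ((n - j : ℕ) : ℤ) = (n : ℤ) - j := by omega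
      push_cast [this]; ring
    · have h1 : n.descFactorial j * ((n:ℤ) - j) = 0 := by
        by_cases h2 : j = n
        · subst h2; simp
        · have : n.descFactorial j = 0 := Nat.descFactorial_eq_zero_iff_lt.mpr (by omega)
          simp [this]
      have h0 : n - j = 0 := by omega
      rw [h0, h1]
      push_cast; ring

open Finset in
lemma nstar_eq_desc' (n L : ℕ) (h : n + 1 ≤ L) :
    nstar n = ∑ j ∈ range L, n.descFactorial j := by
  rw [nstar_eq_desc]
  apply Finset.sum_subset (Finset.range_subset_range.mpr h)
  intro j _ hj
  rw [Finset.mem_range] at hj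
  exact Nat.descFactorial_eq_zero_iff_lt.mpr (by omega)

open Finset in
lemma trunc (k n : ℕ) : nstar n ≡ ∑ j ∈ range (2^k), n.descFactorial j [MOD 2^k] := by
  by_cases h : n + 1 ≤ 2^k
  · rw [nstar_eq_desc' n _ h]
  · rw [nstar_eq_desc, ← Finset.sum_range_add_sum_Ico _ (show 2^k ≤ n+1 by omega)]
    have : ∑ j ∈ Ico (2^k) (n+1), n.descFactorial j ≡ 0 [MOD 2^k] := by
      apply (Nat.modEq_zero_iff_dvd).mpr
      apply Finset.dvd_sum
      intro j hj
      rw [Finset.mem_Ico] at hj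
      exact dvd_trans (Nat.dvd_factorial (pow_pos (by norm_num : (0:ℕ) < 2) k) hj.1)
        (Nat.factorial_dvd_descFactorial n j)
    calc ∑ j ∈ range (2^k), n.descFactorial j + ∑ j ∈ Ico (2^k) (n+1), n.descFactorial j
        ≡ ∑ j ∈ range (2^k), n.descFactorial j + 0 [MOD 2^k] := Nat.ModEq.add_left _ this
      _ = ∑ j ∈ range (2^k), n.descFactorial j := by ring

lemma PZ_even (j : ℕ) (y : ℤ) (hy : Odd y) (hj : 2 ≤ j) : (2:ℤ) ∣ PZ j y := by
  have h1 : ((y : ℤ) - 1) ∣ PZ j y := by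
    have : (1:ℕ) ∈ Finset.range j := Finset.mem_range.mpr (by omega)
    simpa [PZ] using Finset.dvd_prod_of_mem (fun i => y - (i:ℕ)) this
  obtain ⟨a, rfl⟩ := hy
  exact dvd_trans ⟨a, by ring⟩ h1

lemma DD_even (x y : ℤ) (hx : Odd x) (hy : Odd y) :
    ∀ j, 4 ≤ j → (2:ℤ) ∣ DD j x y := by
  intro j hj
  induction j, hj using Nat.le_induction with
  | base =>
    show (2:ℤ) ∣ (x - 3) * DD 3 x y + PZ 3 y
    obtain ⟨a, ha⟩ := hx
    exact dvd_add (Dvd.dvd.mul_right ⟨a - 1, by omega⟩ _) (PZ_even 3 y hy (by norm_num))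
  | succ j hj ih =>
    show (2:ℤ) ∣ (x - j) * DD j x y + PZ j y
    exact dvd_add (Dvd.dvd.mul_left ih _) (PZ_even j y hy (by omega))

lemma B_odd (x y : ℤ) (hx : Odd x) (hy : Odd y) (K : ℕ) (hK : 4 ≤ K) :
    ¬ (2:ℤ) ∣ ∑ j ∈ Finset.range K, DD j x y := by
  rw [← Finset.sum_range_add_sum_Ico _ hK]
  have hR : (2:ℤ) ∣ ∑ j ∈ Finset.Ico 4 K, DD j x y := by
    apply Finset.dvd_sum
    intro j hj
    exact DD_even x y hx hy j (Finset.mem_Ico.mp hj).1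
  have hF : ¬ (2:ℤ) ∣ ∑ j ∈ Finset.range 4, DD j x y := by
    obtain ⟨a, rfl⟩ := hx
    obtain ⟨b, rfl⟩ := hy
    have : ∑ j ∈ Finset.range 4, DD j (2*a+1) (2*b+1)
        = 2 * (a + b + 2*a^2 + 2*a*b + 2*b^2) + 1 := by
      simp [Finset.sum_range_succ, Finset.prod_range_succ, DD, PZ]
      ring
    rw [this]
    omega
  intro h
  exact hF ((dvd_add_right hR).mp (by rwa [add_comm] at h))

lemma nstar_pos (n : ℕ) : 0 < nstar n := by
  cases n with
  | zero => simp [nstar]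
  | succ p => rw [nstar_succ]; omega

lemma nstar_lt (n t : ℕ) (ht : 0 < t) : nstar n < nstar (n + t) := by
  induction t with
  | zero => omega
  | succ s ih =>
    have h1 : nstar (n + s) < nstar (n + s + 1) := by
      rw [nstar_succ]
      have := nstar_pos (n + s)
      nlinarith
    rw [show n + (s+1) = (n+s)+1 from rfl]
    rcases Nat.eq_zero_or_pos s with hs | hs
    · subst hs; simpa using h1
    · have := ih hs
      omega

lemma arg_odd (v : ℕ) (h : 2 ∣ nstar v) : Odd v := by
  cases v with
  | zero => simp [nstar] at h
  | succ p =>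
    rw [nstar_succ] at h
    rcases Nat.even_or_odd p with he | ho
    · obtain ⟨c, rfl⟩ := he
      exact ⟨c, by omega⟩
    · exfalso
      obtain ⟨c, rfl⟩ := ho
      have h2 : 2 ∣ (2*c+1+1) * nstar (2*c+1) := ⟨(c+1) * nstar (2*c+1), by ring⟩
      omega

theorem pow_dvd_of_nstar_pow (k n t : ℕ) (hk : 4 ≤ k) (ht : 0 < t)
    (h1 : nstar n = 2 ^ k) (h2 : ∃ m, nstar (n + t) = 2 ^ m) :
    2 ^ k ∣ t := by
  obtain ⟨m, hm⟩ := h2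
  have hlt : nstar n < nstar (n + t) := nstar_lt n t ht
  have hkm : k < m := by
    rw [h1, hm] at hlt
    exact (Nat.pow_lt_pow_iff_right (by norm_num)).mp hlt
  -- oddness
  have hno : Odd n := arg_odd n (by rw [h1]; exact dvd_pow_self 2 (by omega))
  have hnto : Odd (n + t) := arg_odd (n + t) (by rw [hm]; exact dvd_pow_self 2 (by omega))
  have hx : Odd ((n + t : ℕ) : ℤ) := Odd.natCast hnto
  have hy : Odd ((n : ℕ) : ℤ) := Odd.natCast hno
  -- divisibility of truncated sums
  have key : ∀ v : ℕ, 2 ^ k ∣ nstar v →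
      ((2:ℤ) ^ k) ∣ ∑ j ∈ Finset.range (2^k), PZ j (v : ℤ) := by
    intro v hv
    have h3 : (2^k : ℕ) ∣ ∑ j ∈ Finset.range (2^k), v.descFactorial j :=
      (Nat.modEq_zero_iff_dvd).mp (((trunc k v).symm.trans (Nat.modEq_zero_iff_dvd.mpr hv)))
    have h4 : ((∑ j ∈ Finset.range (2^k), v.descFactorial j : ℕ) : ℤ)
        = ∑ j ∈ Finset.range (2^k), PZ j (v : ℤ) := by
      push_cast
      exact Finset.sum_congr rfl (fun j _ => cast_descFactorial v j)
    rw [← h4]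
    exact_mod_cast Int.natCast_dvd_natCast.mpr h3
  have d1 : ((2:ℤ) ^ k) ∣ ∑ j ∈ Finset.range (2^k), PZ j (n : ℤ) :=
    key n (by rw [h1])
  have d2 : ((2:ℤ) ^ k) ∣ ∑ j ∈ Finset.range (2^k), PZ j ((n + t : ℕ) : ℤ) :=
    key (n + t) (by rw [hm]; exact pow_dvd_pow 2 hkm.le)
  -- difference factorization
  set B : ℤ := ∑ j ∈ Finset.range (2^k), DD j ((n + t : ℕ) : ℤ) (n : ℤ) with hB
  have hdiff : (∑ j ∈ Finset.range (2^k), PZ j ((n + t : ℕ) : ℤ))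
      - (∑ j ∈ Finset.range (2^k), PZ j (n : ℤ)) = (t : ℤ) * B := by
    rw [← Finset.sum_sub_distrib]
    have : ∀ j ∈ Finset.range (2^k), PZ j ((n + t : ℕ) : ℤ) - PZ j (n : ℤ)
        = (t : ℤ) * DD j ((n + t : ℕ) : ℤ) (n : ℤ) := by
      intro j _
      rw [PZ_sub]
      congr 1
      push_cast
      ring
    rw [Finset.sum_congr rfl this, ← Finset.mul_sum]
  have d3 : ((2:ℤ) ^ k) ∣ (t : ℤ) * B := hdiff ▸ dvd_sub d2 d1
  -- B is odd
  have hK4 : 4 ≤ 2 ^ k := le_trans (by norm_num) (Nat.pow_le_pow_right (by norm_num) hk)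
  have hBodd : ¬ (2:ℤ) ∣ B := B_odd _ _ hx hy (2^k) hK4
  have hBo : Odd B := Int.not_even_iff_odd.mp (fun he => hBodd he.two_dvd)
  -- conclude in ℕ
  have d4 : 2 ^ k ∣ t * B.natAbs := by
    have := Int.natAbs_dvd_natAbs.mpr d3
    simpa [Int.natAbs_mul, Int.natAbs_pow] using this
  have hcop : Nat.Coprime (2 ^ k) B.natAbs := by
    apply Nat.Coprime.pow_left
    rw [Nat.coprime_two_left]
    exact Int.natAbs_odd.mpr hBo
  exact hcop.dvd_of_dvd_mul_right d4
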